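/- arXiv:2004.04488 — 5 statements merged into one kernel-verified Lean document; each statement's English description precedes it below -/
import Mathlib

section
/- Let G be a bi-block graph on k ≥ 2 vertices and let α be its independence number. Then the spectral radius satisfies ρ(G) ≤ sqrt(α·(k−α)) (which equals the spectral radius of the complete bipartite graph K_{α,k−α}), and equality holds if and only if G is isomorphic to K_{α,k−α}. -/
open scoped Classical

noncomputable section

namespace BiBlockPaper

variable {V : Type*}

/-- A set of vertices is independent: no two of its vertices are adjacent. -/
def IsIndep (G : SimpleGraph V) (s : Set V) : Prop :=
  s.Pairwise fun u w => ¬ G.Adj u w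

/-- The independence number of a finite simple graph: the maximum cardinality
of an independent set of vertices. -/
noncomputable def indepNum [Fintype V] (G : SimpleGraph V) : ℕ :=
  sSup {k : ℕ | ∃ s : Set V, IsIndep G s ∧ s.ncard = k}

/-- The (real) adjacency matrix of a finite simple graph. -/
noncomputable def adjMat [Fintype V] (G : SimpleGraph V) : Matrix V V ℝ :=
  fun i j => if G.Adj i j then 1 else 0

/-- The spectral radius of a finite simple graph: the largest (real) eigenvalue of
its adjacency matrix. -/
noncomputable def specRad [Fintype V] (G : SimpleGraph V) : ℝ :=
  sSup {t : ℝ | ∃ X : V → ℝ, X ≠ 0 ∧ (adjMat G).mulVec X = t • X}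

/-- `v` is a cut-vertex of the subgraph `H`: it belongs to `H` and deleting it
disconnects `H`. -/
def IsCutVtxOfSub {G : SimpleGraph V} (H : G.Subgraph) (v : V) : Prop :=
  v ∈ H.verts ∧ ¬ (H.deleteVerts {v}).coe.Preconnected

/-- `H` is a block of `G`: a maximal connected subgraph of `G` having no cut-vertex. -/
def IsBlock (G : SimpleGraph V) (H : G.Subgraph) : Prop :=
  H.Connected ∧ (∀ v, ¬ IsCutVtxOfSub H v) ∧
    ∀ H' : G.Subgraph, H ≤ H' → H'.Connected → (∀ v, ¬ IsCutVtxOfSub H' v) → H' = H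

/-- A subgraph is a complete bipartite graph (on its own vertex set). -/
def SubIsCompleteBipartite {G : SimpleGraph V} (H : G.Subgraph) : Prop :=
  ∃ M N : Set V, M.Nonempty ∧ N.Nonempty ∧ Disjoint M N ∧ M ∪ N = H.verts ∧
    ∀ u w, H.Adj u w ↔ (u ∈ M ∧ w ∈ N) ∨ (u ∈ N ∧ w ∈ M)

/-- A bi-block graph: a connected graph each of whose blocks is a complete
bipartite graph. -/
def IsBiBlockGraph (G : SimpleGraph V) : Prop :=
  G.Connected ∧ ∀ H : G.Subgraph, IsBlock G H → SubIsCompleteBipartite H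

/-- `v` is a cut-vertex of `G`: deleting `v` disconnects `G`. -/
def IsCutVertex (G : SimpleGraph V) (v : V) : Prop :=
  ¬ (G.induce ({v}ᶜ : Set V)).Preconnected

/-- The block index of `v`: the number of blocks of `G` containing `v`. -/
noncomputable def blockIndex (G : SimpleGraph V) (v : V) : ℕ :=
  {H : G.Subgraph | IsBlock G H ∧ v ∈ H.verts}.ncard

/-- `G` is a complete bipartite graph. -/
def IsCompleteBipartite (G : SimpleGraph V) : Prop :=
  ∃ M N : Set V, M.Nonempty ∧ N.Nonempty ∧ Disjoint M N ∧ M ∪ N = Set.univ ∧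
    ∀ u w, G.Adj u w ↔ (u ∈ M ∧ w ∈ N) ∨ (u ∈ N ∧ w ∈ M)

/-- Vertex type of the two-block graph `G(p,q,m,n)`: the parts are
`P` (size `p`), `Q \ {v}` (size `q-1`), the glue vertex `v`,
`M \ {v}` (size `m-1`) and `N` (size `n`). -/
abbrev TBV (p q m n : ℕ) : Type :=
  Fin p ⊕ (Fin (q - 1) ⊕ (Unit ⊕ (Fin (m - 1) ⊕ Fin n)))

/-- Which of the five pieces of `TBV p q m n` a vertex lies in:
`0 ↦ P`, `1 ↦ Q \ {v}`, `2 ↦ v`, `3 ↦ M \ {v}`, `4 ↦ N`.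
So `Q` consists of the vertices with tag `1` or `2`, and `M` of those with tag `2` or `3`. -/
def part {p q m n : ℕ} : TBV p q m n → ℕ
  | Sum.inl _ => 0
  | Sum.inr (Sum.inl _) => 1
  | Sum.inr (Sum.inr (Sum.inl _)) => 2
  | Sum.inr (Sum.inr (Sum.inr (Sum.inl _))) => 3
  | Sum.inr (Sum.inr (Sum.inr (Sum.inr _))) => 4

/-- The two-block graph `G(p,q,m,n)`: two complete bipartite blocks
`K(P,Q)` and `K(M,N)` glued at the cut-vertex `v`, where `Q ∩ M = {v}`. -/
def twoBlock (p q m n : ℕ) : SimpleGraph (TBV p q m n) where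
  Adj x y :=
    (part x = 0 ∧ (part y = 1 ∨ part y = 2)) ∨
    ((part x = 1 ∨ part x = 2) ∧ part y = 0) ∨
    ((part x = 2 ∨ part x = 3) ∧ part y = 4) ∨
    (part x = 4 ∧ (part y = 2 ∨ part y = 3))
  symm := ⟨fun x y h => by tauto⟩
  loopless := ⟨fun x h => by omega⟩

/-- The glue (cut-)vertex `v` of `G(p,q,m,n)`. -/
def glue (p q m n : ℕ) : TBV p q m n := Sum.inr (Sum.inr (Sum.inl ()))

/-!
A triangle of a bi-block graph would lie in a single block, which is complete bipartite, so
bi-block graphs are triangle-free. For a triangle-free graph with `m` edges, Nosal's argument gives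
`ρ ≤ √m`: evaluate `A² X = ρ² X` at a coordinate where `|X|` is maximal, and use that the degrees
over an (independent) neighbourhood sum to at most `m`. Moreover every degree is at most `α`, and a
maximum independent set `S` meets each edge at most once, so `2m ≤ m + α (n - α)`. When
`m = α (n - α)` both estimates are sharp: `Sᶜ` is independent and every vertex of `Sᶜ` is joined to
all of `S`. Conversely, `K_{a,b}` has the eigenvector `(√b, …, √b, √a, …, √a)` with eigenvalue
`√(ab)`.
-/

open Finset SimpleGraph

section Blocks

variable {G : SimpleGraph V} {H : G.Subgraph}

theorem preconnected_coe_of_pairwise_adj (h : H.verts.Pairwise H.Adj) : H.coe.Preconnected := by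
  rintro ⟨a, ha⟩ ⟨b, hb⟩
  obtain rfl | hab := eq_or_ne a b
  · rfl
  · exact (h ha hb hab).coe.reachable

theorem not_isCutVtxOfSub_of_pairwise_adj (h : H.verts.Pairwise H.Adj) (v : V) :
    ¬ IsCutVtxOfSub H v := fun ⟨_, hdisc⟩ =>
  hdisc <| preconnected_coe_of_pairwise_adj fun _ ha _ hb hab =>
    (H.deleteVerts_adj).mpr ⟨ha.1, ha.2, hb.1, hb.2, h ha.1 hb.1 hab⟩

theorem exists_isBlock_ge [Finite V] (hc : H.Connected) (hcut : ∀ v, ¬ IsCutVtxOfSub H v) :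
    ∃ B, IsBlock G B ∧ H ≤ B := by
  obtain ⟨B, hB⟩ := Set.Finite.exists_le_maximal (Set.toFinite
    {B : G.Subgraph | B.Connected ∧ ∀ v, ¬ IsCutVtxOfSub B v}) ⟨hc, hcut⟩
  exact ⟨B, ⟨hB.2.prop.1, hB.2.prop.2, fun B' hle hc' hcut' =>
    (hB.2.eq_of_le ⟨hc', hcut'⟩ hle).symm⟩, hB.1⟩

theorem SubIsCompleteBipartite.not_adj_of_adj_of_adj (hH : SubIsCompleteBipartite H)
    {u v w : V} (huv : H.Adj u v) (hvw : H.Adj v w) : ¬ H.Adj u w := by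
  obtain ⟨M, N, -, -, hMN, -, hadj⟩ := hH
  have := Set.disjoint_left.mp hMN
  rw [hadj] at huv hvw ⊢
  tauto

theorem IsBiBlockGraph.cliqueFree_three [Finite V] (hG : IsBiBlockGraph G) : G.CliqueFree 3 := by
  intro s hs
  set T : G.Subgraph := (⊤ : G.Subgraph).induce s
  have hT : T.verts.Pairwise T.Adj := fun a ha b hb hab => ⟨ha, hb, hs.isClique ha hb hab⟩
  obtain ⟨u, v, w, huv, huw, hvw, rfl⟩ := card_eq_three.mp hs.card_eq
  have hTc : T.Connected :=
    ⟨(connected_iff _).mpr ⟨preconnected_coe_of_pairwise_adj hT, ⟨⟨u, by simp [T]⟩⟩⟩⟩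
  obtain ⟨B, hB, hTB⟩ := exists_isBlock_ge hTc (not_isCutVtxOfSub_of_pairwise_adj hT)
  have hB3 : T.verts.Pairwise B.Adj := hT.mono' fun _ _ h => hTB.2 h
  obtain ⟨hu, hv, hw⟩ : u ∈ T.verts ∧ v ∈ T.verts ∧ w ∈ T.verts := by simp [T]
  exact (hG.2 B hB).not_adj_of_adj_of_adj (hB3 hu hv huv) (hB3 hv hw hvw) (hB3 hu hw huw)

end Blocks

section IndependenceNumber

variable [Fintype V] {G : SimpleGraph V}

theorem indepNum_eq_graph_indepNum (G : SimpleGraph V) : indepNum G = G.indepNum := by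
  refine congrArg sSup (Set.ext fun k => ⟨?_, ?_⟩)
  · rintro ⟨s, hs, rfl⟩
    exact ⟨s.toFinset, by rwa [Set.coe_toFinset], (Set.ncard_eq_toFinset_card' s).symm⟩
  · rintro ⟨s, hs, rfl⟩
    exact ⟨s, hs, Set.ncard_coe_finset s⟩

theorem indepNum_pos [Nonempty V] : 0 < G.indepNum := by
  obtain ⟨v⟩ := ‹Nonempty V›
  simpa [Nat.one_le_iff_ne_zero, pos_iff_ne_zero] using
    (show G.IsIndepSet (({v} : Finset V) : Set V) by simp).card_le_indepNum

theorem indepNum_lt_card_of_adj {u v : V} (huv : G.Adj u v) : G.indepNum < Fintype.card V := by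
  obtain ⟨S, hS, hSα⟩ := G.exists_isNIndepSet_indepNum
  refine lt_of_le_of_ne (hSα ▸ card_le_univ S) fun hα => ?_
  have hSuniv : S = univ := eq_univ_of_card S (hSα.trans hα)
  exact hS (by simp [hSuniv]) (by simp [hSuniv]) (G.ne_of_adj huv) huv

theorem degree_le_indepNum (hG : G.CliqueFree 3) (v : V) : G.degree v ≤ G.indepNum := by
  rw [← card_neighborFinset_eq_degree]
  exact IsIndepSet.card_le_indepNum (by simpa using isIndepSet_neighborSet_of_triangleFree G hG v)

end IndependenceNumber

section EdgeCount

variable [Fintype V] {G : SimpleGraph V}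

theorem biUnion_incidenceFinset_subset (S : Finset V) :
    S.biUnion (G.incidenceFinset ·) ⊆ G.edgeFinset := fun e he => by
  obtain ⟨v, -, hv⟩ := mem_biUnion.mp he
  exact G.mem_edgeFinset.mpr ((G.mem_incidenceFinset _ _).mp hv).1

theorem card_biUnion_incidenceFinset {S : Finset V} (hS : G.IsIndepSet S) :
    #(S.biUnion (G.incidenceFinset ·)) = ∑ v ∈ S, G.degree v := by
  rw [card_biUnion fun u hu v hv huv => disjoint_left.mpr fun e heu hev =>
    hS hu hv huv (G.adj_of_mem_incidenceSet huv ((G.mem_incidenceFinset _ _).mp heu)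
      ((G.mem_incidenceFinset _ _).mp hev))]
  exact sum_congr rfl fun v _ => G.card_incidenceFinset_eq_degree v

theorem sum_degree_le_card_edgeFinset {S : Finset V} (hS : G.IsIndepSet S) :
    ∑ v ∈ S, G.degree v ≤ #G.edgeFinset :=
  card_biUnion_incidenceFinset hS ▸ card_le_card (biUnion_incidenceFinset_subset S)

theorem isIndepSet_compl_of_sum_degree_eq {S : Finset V} (hS : G.IsIndepSet S)
    (h : ∑ v ∈ S, G.degree v = #G.edgeFinset) : G.IsIndepSet ↑Sᶜ := by
  have hcover : S.biUnion (G.incidenceFinset ·) = G.edgeFinset :=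
    eq_of_subset_of_card_le (biUnion_incidenceFinset_subset S)
      (by rw [card_biUnion_incidenceFinset hS, h])
  intro a ha b hb _ hab
  obtain ⟨v, hvS, hv⟩ := mem_biUnion.mp (hcover ▸ G.mem_edgeFinset.mpr hab : s(a, b) ∈ _)
  rcases Sym2.mem_iff.mp ((G.mem_incidenceFinset _ _).mp hv).2 with rfl | rfl
  · exact (mem_compl.mp ha) hvS
  · exact (mem_compl.mp hb) hvS

theorem sum_degree_compl_le (hG : G.CliqueFree 3) (S : Finset V) :
    ∑ v ∈ Sᶜ, G.degree v ≤ G.indepNum * (Fintype.card V - #S) := by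
  rw [mul_comm, ← card_compl]
  exact sum_le_card_nsmul _ _ _ fun v _ => degree_le_indepNum hG v

theorem card_edgeFinset_le_indepNum_mul (hG : G.CliqueFree 3) :
    #G.edgeFinset ≤ G.indepNum * (Fintype.card V - G.indepNum) := by
  obtain ⟨S, hS, hSα⟩ := G.exists_isNIndepSet_indepNum
  have hsum := sum_add_sum_compl S (G.degree ·) ▸ G.sum_degrees_eq_twice_card_edges
  have hSsum := sum_degree_le_card_edgeFinset hS
  have hTsum := hSα ▸ sum_degree_compl_le hG S
  omega

end EdgeCount

section CompleteBipartite

variable [Fintype V] {G : SimpleGraph V}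

theorem nonempty_iso_completeBipartiteGraph {S : Finset V}
    (h : ∀ a b, G.Adj a b ↔ a ∈ S ∧ b ∉ S ∨ a ∉ S ∧ b ∈ S) :
    Nonempty (G ≃g completeBipartiteGraph (Fin #S) (Fin (Fintype.card V - #S))) := by
  let φ : G ≃g completeBipartiteGraph {a // a ∈ S} {a // a ∉ S} :=
    { toEquiv := (Equiv.sumCompl (· ∈ S)).symm
      map_rel_iff' := fun {a b} => by
        rw [h]
        by_cases ha : a ∈ S <;> by_cases hb : b ∈ S <;>
          simp [Equiv.sumCompl_symm_apply_of_pos, Equiv.sumCompl_symm_apply_of_neg, ha, hb] }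
  exact ⟨φ.trans (completeBipartiteGraphCongr (Fintype.equivFinOfCardEq (by simp))
    (Fintype.equivFinOfCardEq (by simp)))⟩

theorem adj_iff_of_neighborFinset_eq {S : Finset V} (hS : G.IsIndepSet S)
    (h : ∀ v ∉ S, G.neighborFinset v = S) (a b : V) :
    G.Adj a b ↔ a ∈ S ∧ b ∉ S ∨ a ∉ S ∧ b ∈ S := by
  by_cases ha : a ∈ S
  · by_cases hb : b ∈ S
    · simpa [ha, hb] using fun hab => hS ha hb (G.ne_of_adj hab) hab
    · rw [G.adj_comm, ← mem_neighborFinset, h b hb]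
      simp [ha, hb]
  · simp [ha, ← mem_neighborFinset, h a ha]

theorem nonempty_iso_completeBipartiteGraph_of_le_card_edgeFinset (hG : G.CliqueFree 3)
    (h : G.indepNum * (Fintype.card V - G.indepNum) ≤ #G.edgeFinset) :
    Nonempty
      (G ≃g completeBipartiteGraph (Fin G.indepNum) (Fin (Fintype.card V - G.indepNum))) := by
  obtain ⟨S, hS, hSα⟩ := G.exists_isNIndepSet_indepNum
  have hsum := sum_add_sum_compl S (G.degree ·) ▸ G.sum_degrees_eq_twice_card_edges
  have hSsum := sum_degree_le_card_edgeFinset hS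
  have hTsum := hSα ▸ sum_degree_compl_le hG S
  have hTindep := isIndepSet_compl_of_sum_degree_eq hS (by omega)
  have hdeg : ∀ v ∈ Sᶜ, G.degree v = G.indepNum := by
    refine (sum_eq_sum_iff_of_le fun v _ => degree_le_indepNum hG v).mp ?_
    rw [sum_const, card_compl, hSα, smul_eq_mul, mul_comm]
    omega
  have hnbr (v : V) (hv : v ∉ S) : G.neighborFinset v = S := by
    refine eq_of_subset_of_card_le (fun w hw => by_contra fun hwS => ?_) ?_
    · have hvw := (G.mem_neighborFinset _ _).mp hw
      exact hTindep (by simpa using hv) (by simpa using hwS) (G.ne_of_adj hvw) hvw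
    · rw [card_neighborFinset_eq_degree, hdeg v (mem_compl.mpr hv), hSα]
  rw [← hSα]
  exact nonempty_iso_completeBipartiteGraph (adj_iff_of_neighborFinset_eq hS hnbr)

end CompleteBipartite

section Spectrum

variable [Fintype V]

def adjEigenvalues (G : SimpleGraph V) : Set ℝ :=
  {t | ∃ X : V → ℝ, X ≠ 0 ∧ (adjMat G).mulVec X = t • X}

theorem adjMat_eq_adjMatrix (G : SimpleGraph V) : adjMat G = G.adjMatrix ℝ := rfl

theorem sq_le_card_edgeFinset_of_mem_adjEigenvalues {G : SimpleGraph V} (hG : G.CliqueFree 3)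
    {t : ℝ} (ht : t ∈ adjEigenvalues G) : t ^ 2 ≤ #G.edgeFinset := by
  obtain ⟨X, hX0, hX⟩ := ht
  have hsum (v : V) : ∑ u ∈ G.neighborFinset v, X u = t * X v := by
    simpa [adjMat_eq_adjMatrix, adjMatrix_mulVec_apply] using congrFun hX v
  have : Nonempty V := ⟨(Function.ne_iff.mp hX0).choose⟩
  obtain ⟨i, hi⟩ := Finite.exists_max (|X ·|)
  have hXi : 0 < |X i| := by
    by_contra! h0
    exact hX0 (funext fun v => abs_nonpos_iff.mp ((hi v).trans h0))
  have hnbr (v : V) : |∑ u ∈ G.neighborFinset v, X u| ≤ G.degree v * |X i| :=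
    calc |∑ u ∈ G.neighborFinset v, X u| ≤ ∑ u ∈ G.neighborFinset v, |X u| := abs_sum_le_sum_abs _ _
      _ ≤ ∑ u ∈ G.neighborFinset v, |X i| := sum_le_sum fun u _ => hi u
      _ = G.degree v * |X i| := by rw [sum_const, card_neighborFinset_eq_degree, nsmul_eq_mul]
  have hdeg : ∑ j ∈ G.neighborFinset i, G.degree j ≤ #G.edgeFinset :=
    sum_degree_le_card_edgeFinset (by simpa using isIndepSet_neighborSet_of_triangleFree G hG i)
  refine le_of_mul_le_mul_right ?_ hXi
  calc t ^ 2 * |X i| = |∑ j ∈ G.neighborFinset i, ∑ l ∈ G.neighborFinset j, X l| := by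
        rw [sum_congr rfl fun j _ => hsum j, ← mul_sum, hsum, ← mul_assoc, ← sq, abs_mul,
          abs_of_nonneg (sq_nonneg t)]
    _ ≤ ∑ j ∈ G.neighborFinset i, |∑ l ∈ G.neighborFinset j, X l| := abs_sum_le_sum_abs _ _
    _ ≤ ∑ j ∈ G.neighborFinset i, (G.degree j * |X i| : ℝ) := sum_le_sum fun j _ => hnbr j
    _ = ((∑ j ∈ G.neighborFinset i, G.degree j : ℕ) : ℝ) * |X i| := by push_cast; rw [sum_mul]
    _ ≤ #G.edgeFinset * |X i| := by gcongr

theorem le_sqrt_card_edgeFinset_of_mem_adjEigenvalues {G : SimpleGraph V} (hG : G.CliqueFree 3)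
    {t : ℝ} (ht : t ∈ adjEigenvalues G) : t ≤ √(#G.edgeFinset : ℝ) :=
  (le_abs_self t).trans (Real.abs_le_sqrt (sq_le_card_edgeFinset_of_mem_adjEigenvalues hG ht))

theorem bddAbove_adjEigenvalues {G : SimpleGraph V} (hG : G.CliqueFree 3) :
    BddAbove (adjEigenvalues G) :=
  ⟨_, fun _ => le_sqrt_card_edgeFinset_of_mem_adjEigenvalues hG⟩

theorem specRad_le_sqrt_card_edgeFinset {G : SimpleGraph V} (hG : G.CliqueFree 3) :
    specRad G ≤ √(#G.edgeFinset : ℝ) :=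
  Real.sSup_le (fun _ => le_sqrt_card_edgeFinset_of_mem_adjEigenvalues hG) (Real.sqrt_nonneg _)

theorem adjEigenvalues_subset_of_iso {W : Type*} [Fintype W] {G : SimpleGraph V}
    {H : SimpleGraph W} (e : G ≃g H) : adjEigenvalues H ⊆ adjEigenvalues G := by
  rintro t ⟨X, hX0, hX⟩
  refine ⟨X ∘ e, fun h => hX0 (funext fun w => by simpa using congrFun h (e.symm w)), ?_⟩
  have hA : G.adjMatrix ℝ = (H.adjMatrix ℝ).submatrix e.toEquiv e.toEquiv :=
    (e.toEmbedding.submatrix_adjMatrix ℝ).symm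
  rw [adjMat_eq_adjMatrix, hA, Matrix.submatrix_mulVec_equiv,
    show (X ∘ e) ∘ e.toEquiv.symm = X from funext fun w => congrArg X (e.apply_symm_apply w),
    ← adjMat_eq_adjMatrix, hX]
  rfl

theorem sqrt_mem_adjEigenvalues_completeBipartiteGraph {W₁ W₂ : Type*} [Fintype W₁] [Fintype W₂]
    [Nonempty W₁] [Nonempty W₂] :
    √(Fintype.card W₁ * Fintype.card W₂) ∈ adjEigenvalues (completeBipartiteGraph W₁ W₂) := by
  refine ⟨Sum.elim (fun _ => √(Fintype.card W₂)) (fun _ => √(Fintype.card W₁)), ?_, ?_⟩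
  · intro h
    simpa using congrFun h (Sum.inl (Classical.arbitrary W₁))
  · have ha := Real.mul_self_sqrt (Nat.cast_nonneg (α := ℝ) (Fintype.card W₁))
    have hb := Real.mul_self_sqrt (Nat.cast_nonneg (α := ℝ) (Fintype.card W₂))
    ext (i | j) <;> simp [adjMat, Matrix.mulVec, dotProduct, Fintype.sum_sum_type]
    · linear_combination -√(Fintype.card W₁ : ℝ) * hb
    · linear_combination -√(Fintype.card W₂ : ℝ) * ha

end Spectrum

/-- For a bi-block graph `G` on `k ≥ 2` vertices with independence
number `α`, the spectral radius satisfies `ρ(G) ≤ √(α(k-α))` (the spectral radius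
of `K_{α,k-α}`), with equality iff `G ≅ K_{α,k-α}`. -/
theorem biBlock_specRad_le_and_eq_iff {V : Type*} [Fintype V] (G : SimpleGraph V)
    (k : ℕ) (hk : Fintype.card V = k) (hk2 : 2 ≤ k)
    (hG : IsBiBlockGraph G) (α : ℕ) (hα : α = indepNum G) :
    specRad G ≤ Real.sqrt ((α : ℝ) * ((k : ℝ) - (α : ℝ))) ∧
      (specRad G = Real.sqrt ((α : ℝ) * ((k : ℝ) - (α : ℝ))) ↔
        Nonempty (G ≃g completeBipartiteGraph (Fin α) (Fin (k - α)))) := by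
  rw [indepNum_eq_graph_indepNum] at hα
  subst hk hα
  have hG3 := hG.cliqueFree_three
  have : Nontrivial V := Fintype.one_lt_card_iff_nontrivial.mp hk2
  obtain ⟨w, hadj⟩ := hG.1.preconnected.exists_adj_of_nontrivial (Classical.arbitrary V)
  have hαn := indepNum_lt_card_of_adj hadj
  have hρ := specRad_le_sqrt_card_edgeFinset hG3
  have hm : (#G.edgeFinset : ℝ) ≤ G.indepNum * (Fintype.card V - G.indepNum : ℕ) := by
    exact_mod_cast card_edgeFinset_le_indepNum_mul hG3
  rw [← Nat.cast_sub hαn.le]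
  refine ⟨hρ.trans (Real.sqrt_le_sqrt hm), fun heq => ?_, fun ⟨e⟩ => ?_⟩
  · refine nonempty_iso_completeBipartiteGraph_of_le_card_edgeFinset hG3 ?_
    rw [heq, Real.sqrt_le_sqrt_iff (Nat.cast_nonneg _)] at hρ
    exact_mod_cast hρ
  · have : Nonempty (Fin G.indepNum) := Fin.pos_iff_nonempty.mp indepNum_pos
    have : Nonempty (Fin (Fintype.card V - G.indepNum)) := Fin.pos_iff_nonempty.mp (by omega)
    refine le_antisymm (hρ.trans (Real.sqrt_le_sqrt hm)) (le_csSup (bddAbove_adjEigenvalues hG3)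
      (adjEigenvalues_subset_of_iso e ?_))
    simpa using sqrt_mem_adjEigenvalues_completeBipartiteGraph
      (W₁ := Fin G.indepNum) (W₂ := Fin (Fintype.card V - G.indepNum))

end BiBlockPaper
end
end

section
/- With the attached-block setup, let I be a maximum independent set of G. If v ∈ I, then I|_{G−H} = I ∩ A is a maximum independent set of G−H. -/
open scoped Classical

noncomputable section

namespace BiBlockPaper

variable {V : Type*}

/-! Since `v ∈ I`, a vertex of `A` outside `I` lies in `A \ {v}` and a vertex of `I` outside `A`
lies in `B \ {v}`, so no edge joins them. Hence a maximum independent set of `G[A]` together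
with `I \ A` is independent in `G`, and the maximality of `I` forces `|I ∩ A| ≥ α(G[A])`. -/

theorem bddAbove_ncard_isIndep [Fintype V] (G : SimpleGraph V) :
    BddAbove {k : ℕ | ∃ s : Set V, IsIndep G s ∧ s.ncard = k} :=
  ⟨Fintype.card V, by
    rintro k ⟨s, -, rfl⟩
    simpa using Set.ncard_le_ncard (Set.subset_univ s)⟩

theorem exists_isIndep_ncard_eq_indepNum [Fintype V] (G : SimpleGraph V) :
    ∃ s : Set V, IsIndep G s ∧ s.ncard = indepNum G :=
  Nat.sSup_mem (s := {k : ℕ | ∃ s : Set V, IsIndep G s ∧ s.ncard = k})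
    ⟨0, ∅, Set.pairwise_empty _, Set.ncard_empty V⟩ (bddAbove_ncard_isIndep G)

namespace IsIndep

variable {G : SimpleGraph V}

theorem ncard_le_indepNum [Fintype V] {s : Set V} (hs : IsIndep G s) :
    s.ncard ≤ indepNum G :=
  le_csSup (bddAbove_ncard_isIndep G) ⟨s, hs, rfl⟩

theorem image_val_iff {A : Set V} {s : Set A} :
    IsIndep G (Subtype.val '' s) ↔ IsIndep (G.induce A) s :=
  Subtype.val_injective.injOn.pairwise_image

theorem union {s t : Set V} (hs : IsIndep G s) (ht : IsIndep G t)
    (hst : ∀ x ∈ s, ∀ y ∈ t, ¬ G.Adj x y) : IsIndep G (s ∪ t) :=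
  Set.pairwise_union.2 ⟨hs, ht, fun x hx y hy _ ↦ ⟨hst x hx y hy, fun h ↦ hst x hx y hy h.symm⟩⟩

end IsIndep

theorem ncard_inter_le_indepNum_induce [Fintype V] {G : SimpleGraph V} {I : Set V}
    (hI : IsIndep G I) (A : Set V) : (I ∩ A).ncard ≤ indepNum (G.induce A) := by
  have hpre : IsIndep (G.induce A) (Subtype.val ⁻¹' I) :=
    IsIndep.image_val_iff.1 (hI.mono (Set.image_preimage_subset _ _))
  calc (I ∩ A).ncard = (Subtype.val '' (Subtype.val ⁻¹' I : Set A)).ncard := by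
        rw [Set.image_preimage_eq_inter_range, Subtype.range_coe]
    _ = (Subtype.val ⁻¹' I : Set A).ncard := Set.ncard_image_of_injective _ Subtype.val_injective
    _ ≤ _ := hpre.ncard_le_indepNum

theorem indepNum_induce_add_ncard_diff_le [Fintype V] {G : SimpleGraph V} {I A : Set V}
    (hI : IsIndep G I) (hsep : ∀ x ∈ A \ I, ∀ y ∈ I \ A, ¬ G.Adj x y) :
    indepNum (G.induce A) + (I \ A).ncard ≤ indepNum G := by
  obtain ⟨s, hs, hcard⟩ := exists_isIndep_ncard_eq_indepNum (G.induce A)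
  have hsA : Subtype.val '' s ⊆ A := Subtype.coe_image_subset A s
  have hunion : IsIndep G (Subtype.val '' s ∪ I \ A) := by
    refine (IsIndep.image_val_iff.2 hs).union (hI.mono Set.sdiff_subset) fun x hx y hy ↦ ?_
    by_cases hxI : x ∈ I
    · exact hI hxI hy.1 (fun h ↦ hy.2 (h ▸ hsA hx))
    · exact hsep x ⟨hsA hx, hxI⟩ y hy
  calc indepNum (G.induce A) + (I \ A).ncard
      = (Subtype.val '' s ∪ I \ A).ncard := by
        rw [Set.ncard_union_eq (Set.disjoint_sdiff_right.mono_left hsA),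
          Set.ncard_image_of_injective s Subtype.val_injective, hcard]
    _ ≤ indepNum G := hunion.ncard_le_indepNum

theorem ncard_inter_eq_indepNum_induce [Fintype V] {G : SimpleGraph V} {I : Set V}
    (hI : IsIndep G I) (hImax : I.ncard = indepNum G) {A : Set V}
    (hsep : ∀ x ∈ A \ I, ∀ y ∈ I \ A, ¬ G.Adj x y) :
    (I ∩ A).ncard = indepNum (G.induce A) := by
  have hsplit := Set.ncard_inter_add_ncard_sdiff_eq_ncard I A
  have hle := ncard_inter_le_indepNum_induce hI A
  have hge := indepNum_induce_add_ncard_diff_le hI hsep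
  omega

theorem attached_restriction_is_max_general {V : Type*} [Fintype V] (G : SimpleGraph V)
    (A B : Set V) (v : V) (hcover : A ∪ B = Set.univ) (hAB : A ∩ B = {v})
    (hsep : ∀ a ∈ A \ {v}, ∀ b ∈ B \ {v}, ¬ G.Adj a b)
    (I : Set V) (hI : IsIndep G I) (hImax : I.ncard = indepNum G)
    (hvI : v ∈ I) :
    (I ∩ A).ncard = indepNum (G.induce A) := by
  have hvA : v ∈ A := (hAB.symm.subset rfl).1
  refine ncard_inter_eq_indepNum_induce hI hImax fun x hx y hy ↦ hsep x ?_ y ?_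
  · exact ⟨hx.1, fun hxv ↦ hx.2 (hxv ▸ hvI)⟩
  · have hyB : y ∈ B := (hcover.symm.subset (Set.mem_univ y)).resolve_left hy.2
    exact ⟨hyB, fun hyv ↦ hy.2 (hyv ▸ hvA)⟩

/-- in the attached-block setup, if `I` is a maximum independent set
of `G` and `v ∈ I`, then `I ∩ A` is a maximum independent set of `G - H`
(the induced subgraph of `G` on `A`). -/
theorem attached_restriction_is_max {V : Type*} [Fintype V] (G : SimpleGraph V)
    (A B : Set V) (v : V) (hcover : A ∪ B = Set.univ) (hAB : A ∩ B = {v})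
    (hvB : v ∈ B)
    (hsep : ∀ a ∈ A \ {v}, ∀ b ∈ B \ {v}, ¬ G.Adj a b)
    (M N : Set V) (hM : M.Nonempty) (hN : N.Nonempty) (hMN : Disjoint M N)
    (hMNB : M ∪ N = B)
    (hbip : ∀ u ∈ B, ∀ w ∈ B, (G.Adj u w ↔ (u ∈ M ∧ w ∈ N) ∨ (u ∈ N ∧ w ∈ M)))
    (I : Set V) (hI : IsIndep G I) (hImax : I.ncard = indepNum G)
    (hvI : v ∈ I) :
    (I ∩ A).ncard = indepNum (G.induce A) :=
  attached_restriction_is_max_general G A B v hcover hAB hsep I hI hImax hvI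

end BiBlockPaper
end
end

section
/- With the attached-block setup, let I be a maximum independent set of G. If v ∉ I and I|_{G−H} = I ∩ A is not a maximum independent set of G−H, then every maximum independent set of G−H contains v. -/
/-!
If some maximum independent set `J` of `G[A]` avoided `v`, then `J ∪ (I \ A)` would be an
independent set of `G`: `I \ A` lies in `B \ {v}` and `J` in `A \ {v}`, and there are no edges
between these. Since `J` is larger than `I ∩ A`, this set would be larger than `I`.
-/

open scoped Classical

noncomputable section

namespace BiBlockPaper

variable {V : Type*}

variable {G : SimpleGraph V}

lemma IsIndep.union_s6 {s t : Set V} (hs : IsIndep G s) (ht : IsIndep G t)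
    (hst : ∀ u ∈ s, ∀ w ∈ t, ¬ G.Adj u w) : IsIndep G (s ∪ t) :=
  Set.pairwise_union.2 ⟨hs, ht, fun u hu w hw _ => ⟨hst u hu w hw, fun h => hst u hu w hw h.symm⟩⟩

lemma IsIndep.union_sdiff_of_separation {A B : Set V} {v : V} (hcover : A ∪ B = Set.univ)
    (hsep : ∀ a ∈ A \ {v}, ∀ b ∈ B \ {v}, ¬ G.Adj a b) {I J : Set V} (hI : IsIndep G I)
    (hvI : v ∉ I) (hJ : IsIndep G J) (hJA : J ⊆ A) (hvJ : v ∉ J) : IsIndep G (J ∪ (I \ A)) := by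
  refine hJ.union_s6 (hI.mono Set.sdiff_subset) fun u hu w hw => hsep u ⟨hJA hu, ?_⟩ w ⟨?_, ?_⟩
  · exact fun h => hvJ (h ▸ hu)
  · simpa [hw.2] using hcover.ge (Set.mem_univ w)
  · exact fun h => hvI (h ▸ hw.1)

variable [Fintype V]

lemma ncard_le_indepNum {s : Set V} (h : IsIndep G s) : s.ncard ≤ indepNum G :=
  le_csSup ⟨Fintype.card V, by rintro k ⟨t, -, rfl⟩; simpa using Set.ncard_le_card t⟩ ⟨s, h, rfl⟩

lemma ncard_le_indepNum_induce {A s : Set V} (hsA : s ⊆ A) (h : IsIndep G s) :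
    s.ncard ≤ indepNum (G.induce A) := by
  have hind : IsIndep (G.induce A) ((↑) ⁻¹' s : Set A) :=
    fun u hu w hw huw => h hu hw (Subtype.coe_injective.ne huw)
  have hcard : ((↑) ⁻¹' s : Set A).ncard = s.ncard := by
    rw [← Set.ncard_image_of_injective _ Subtype.val_injective,
      Subtype.image_preimage_coe, Set.inter_eq_self_of_subset_right hsA]
  exact hcard ▸ ncard_le_indepNum hind

lemma ncard_le_ncard_inter_of_ncard_eq_indepNum {A B : Set V} {v : V}
    (hcover : A ∪ B = Set.univ) (hsep : ∀ a ∈ A \ {v}, ∀ b ∈ B \ {v}, ¬ G.Adj a b)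
    {I J : Set V} (hI : IsIndep G I) (hImax : I.ncard = indepNum G) (hvI : v ∉ I)
    (hJ : IsIndep G J) (hJA : J ⊆ A) (hvJ : v ∉ J) : J.ncard ≤ (I ∩ A).ncard := by
  have hdisj : Disjoint J (I \ A) := Set.disjoint_of_subset_left hJA Set.disjoint_sdiff_right
  have hle := ncard_le_indepNum (hI.union_sdiff_of_separation hcover hsep hvI hJ hJA hvJ)
  rw [Set.ncard_union_eq hdisj, ← hImax, ← Set.ncard_inter_add_ncard_sdiff_eq_ncard I A] at hle
  omega

theorem attached_cutVertex_mem_maxIndep_general {V : Type*} [Fintype V] (G : SimpleGraph V)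
    (A B : Set V) (v : V) (hcover : A ∪ B = Set.univ)
    (hsep : ∀ a ∈ A \ {v}, ∀ b ∈ B \ {v}, ¬ G.Adj a b)
    (I : Set V) (hI : IsIndep G I) (hImax : I.ncard = indepNum G)
    (hvI : v ∉ I) (hnot : (I ∩ A).ncard ≠ indepNum (G.induce A)) :
    ∀ J : Set V, J ⊆ A → IsIndep G J → J.ncard = indepNum (G.induce A) → v ∈ J := by
  intro J hJA hJ hJmax
  by_contra hvJ
  have hIA : (I ∩ A).ncard ≤ indepNum (G.induce A) :=
    ncard_le_indepNum_induce Set.inter_subset_right (hI.mono Set.inter_subset_left)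
  have hJI : J.ncard ≤ (I ∩ A).ncard :=
    ncard_le_ncard_inter_of_ncard_eq_indepNum hcover hsep hI hImax hvI hJ hJA hvJ
  exact hnot (le_antisymm hIA (hJmax ▸ hJI))

/-- in the attached-block setup, if `I` is a maximum independent set
of `G`, `v ∉ I`, and `I ∩ A` is not a maximum independent set of `G - H`, then
every maximum independent set of `G - H` contains `v`. -/
theorem attached_cutVertex_mem_maxIndep {V : Type*} [Fintype V] (G : SimpleGraph V)
    (A B : Set V) (v : V) (hcover : A ∪ B = Set.univ) (hAB : A ∩ B = {v})
    (hvB : v ∈ B)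
    (hsep : ∀ a ∈ A \ {v}, ∀ b ∈ B \ {v}, ¬ G.Adj a b)
    (M N : Set V) (hM : M.Nonempty) (hN : N.Nonempty) (hMN : Disjoint M N)
    (hMNB : M ∪ N = B)
    (hbip : ∀ u ∈ B, ∀ w ∈ B, (G.Adj u w ↔ (u ∈ M ∧ w ∈ N) ∨ (u ∈ N ∧ w ∈ M)))
    (I : Set V) (hI : IsIndep G I) (hImax : I.ncard = indepNum G)
    (hvI : v ∉ I) (hnot : (I ∩ A).ncard ≠ indepNum (G.induce A)) :
    ∀ J : Set V, J ⊆ A → IsIndep G J → J.ncard = indepNum (G.induce A) → v ∈ J :=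
  attached_cutVertex_mem_maxIndep_general G A B v hcover hsep I hI hImax hvI hnot

end BiBlockPaper
end
end

section
/- For all positive integers p, q, m, n, the spectral radius of G(p,q,m,n) equals sqrt( ((pq + mn) + sqrt((pq − mn)² + 4pn)) / 2 ). -/
open scoped Classical

noncomputable section

namespace BiBlockPaper

variable {V : Type*}

/-! The partition `P, Q \ {v}, {v}, M \ {v}, N` is equitable, so the adjacency matrix maps every
vector to one that is constant on the parts. For an eigenvector with eigenvalue `t ≠ 0`, the sums
`S_P`, `S_N` over `P` and `N` are not both zero and satisfy `(t² - pq) S_P = p S_N`,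
`(t² - mn) S_N = n S_P`; hence `(t² - pq)(t² - mn) = pn`, and `t²` is at most the larger root `r`
of this quadratic. Conversely `√r` is an eigenvalue, with an explicit part-constant eigenvector. -/

/-- The larger root of `(x - a) * (x - b) = c`. -/
def largerRoot (a b c : ℝ) : ℝ :=
  (a + b + √((a - b) ^ 2 + 4 * c)) / 2

lemma largerRoot_pos {a b : ℝ} (c : ℝ) (hab : 0 < a + b) : 0 < largerRoot a b c := by
  unfold largerRoot
  positivity

lemma sub_mul_sub_largerRoot {a b c : ℝ} (hc : 0 ≤ c) :
    (largerRoot a b c - a) * (largerRoot a b c - b) = c := by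
  have hD := Real.sq_sqrt (by positivity : 0 ≤ (a - b) ^ 2 + 4 * c)
  unfold largerRoot
  linear_combination hD / 4

lemma le_largerRoot {a b c x : ℝ} (h : (x - a) * (x - b) = c) : x ≤ largerRoot a b c := by
  have : |2 * x - (a + b)| ≤ √((a - b) ^ 2 + 4 * c) :=
    Real.abs_le_sqrt (le_of_eq (by rw [← h]; ring))
  unfold largerRoot
  linarith [le_abs_self (2 * x - (a + b))]

lemma le_sqrt_largerRoot {a b c x : ℝ} (h : (x ^ 2 - a) * (x ^ 2 - b) = c) :
    x ≤ √(largerRoot a b c) :=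
  (le_abs_self x).trans (Real.abs_le_sqrt (le_largerRoot h))

/-- The characteristic equation of the two-by-two matrix `!![a, c₁; c₂, b]`. -/
lemma sub_mul_sub_eq_of_eigenpair {a b c₁ c₂ x u w : ℝ} (hu : (x - a) * u = c₁ * w)
    (hw : (x - b) * w = c₂ * u) (huw : u ≠ 0 ∨ w ≠ 0) : (x - a) * (x - b) = c₁ * c₂ := by
  rcases huw with hu0 | hw0
  · refine mul_right_cancel₀ hu0 ?_
    linear_combination (x - b) * hu + c₁ * hw
  · refine mul_right_cancel₀ hw0 ?_
    linear_combination c₂ * hu + (x - a) * hw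

section TwoBlock

open Matrix

variable {p q m n : ℕ}

/-- The vector taking the values `a, b, c, d, e` on `P, Q \ {v}, {v}, M \ {v}, N`. -/
def blockVec (a b c d e : ℝ) : TBV p q m n → ℝ :=
  Sum.elim (fun _ => a) (Sum.elim (fun _ => b) (Sum.elim (fun _ => c)
    (Sum.elim (fun _ => d) (fun _ => e))))

lemma blockVec_zero : (blockVec 0 0 0 0 0 : TBV p q m n → ℝ) = 0 := by
  funext x
  rcases x with _ | _ | _ | _ | _ <;> rfl

/-- Sums over `P`, `Q \ {v}`, `M \ {v}` and `N`. -/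
def sumP (X : TBV p q m n → ℝ) : ℝ := ∑ i, X (Sum.inl i)

def sumQ (X : TBV p q m n → ℝ) : ℝ := ∑ i, X (Sum.inr (Sum.inl i))

def sumM (X : TBV p q m n → ℝ) : ℝ := ∑ i, X (Sum.inr (Sum.inr (Sum.inr (Sum.inl i))))

def sumN (X : TBV p q m n → ℝ) : ℝ := ∑ i, X (Sum.inr (Sum.inr (Sum.inr (Sum.inr i))))

lemma adjMat_twoBlock_mulVec (X : TBV p q m n → ℝ) :
    adjMat (twoBlock p q m n) *ᵥ X =
      blockVec (sumQ X + X (glue p q m n)) (sumP X) (sumP X + sumN X) (sumN X)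
        (X (glue p q m n) + sumM X) := by
  funext x
  rcases x with _ | _ | _ | _ | _ <;>
    simp [Matrix.mulVec, dotProduct, adjMat, twoBlock, part, glue, blockVec, sumP, sumQ, sumM,
      sumN, Fintype.sum_sum_type]

lemma smul_blockVec (t a b c d e : ℝ) :
    t • (blockVec a b c d e : TBV p q m n → ℝ) =
      blockVec (t * a) (t * b) (t * c) (t * d) (t * e) := by
  funext x
  rcases x with _ | _ | _ | _ | _ <;> rfl

@[simp] lemma sumP_smul (t : ℝ) (X : TBV p q m n → ℝ) : sumP (t • X) = t * sumP X := by
  simp [sumP, Finset.mul_sum]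

@[simp] lemma sumQ_smul (t : ℝ) (X : TBV p q m n → ℝ) : sumQ (t • X) = t * sumQ X := by
  simp [sumQ, Finset.mul_sum]

@[simp] lemma sumM_smul (t : ℝ) (X : TBV p q m n → ℝ) : sumM (t • X) = t * sumM X := by
  simp [sumM, Finset.mul_sum]

@[simp] lemma sumN_smul (t : ℝ) (X : TBV p q m n → ℝ) : sumN (t • X) = t * sumN X := by
  simp [sumN, Finset.mul_sum]

variable (a b c d e : ℝ)

@[simp] lemma sumP_blockVec : sumP (blockVec a b c d e : TBV p q m n → ℝ) = p * a := by
  simp [sumP, blockVec]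

@[simp] lemma sumQ_blockVec :
    sumQ (blockVec a b c d e : TBV p q m n → ℝ) = (q - 1 : ℕ) * b := by
  simp [sumQ, blockVec]

@[simp] lemma sumM_blockVec :
    sumM (blockVec a b c d e : TBV p q m n → ℝ) = (m - 1 : ℕ) * d := by
  simp [sumM, blockVec]

@[simp] lemma sumN_blockVec : sumN (blockVec a b c d e : TBV p q m n → ℝ) = n * e := by
  simp [sumN, blockVec]

@[simp] lemma blockVec_glue : (blockVec a b c d e : TBV p q m n → ℝ) (glue p q m n) = c := rfl

lemma adjMat_twoBlock_mulVec_blockVec :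
    adjMat (twoBlock p q m n) *ᵥ blockVec a b c d e =
      blockVec ((q - 1 : ℕ) * b + c) (p * a) (p * a + n * e) (n * e) (c + (m - 1 : ℕ) * d) := by
  simp [adjMat_twoBlock_mulVec]

lemma blockSums_of_mulVec_eq_smul {t : ℝ} {X : TBV p q m n → ℝ}
    (hX : adjMat (twoBlock p q m n) *ᵥ X = t • X) :
    t * sumP X = p * (sumQ X + X (glue p q m n)) ∧ t * sumQ X = (q - 1 : ℕ) * sumP X ∧
      t * X (glue p q m n) = sumP X + sumN X ∧ t * sumM X = (m - 1 : ℕ) * sumN X ∧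
      t * sumN X = n * (X (glue p q m n) + sumM X) := by
  have h := adjMat_twoBlock_mulVec X
  rw [hX] at h
  refine ⟨?_, ?_, congrFun h (glue p q m n), ?_, ?_⟩
  · simpa using congrArg sumP h
  · simpa using congrArg sumQ h
  · simpa using congrArg sumM h
  · simpa using congrArg sumN h

variable {t : ℝ} {X : TBV p q m n → ℝ}

lemma quotient_eqs_of_mulVec_eq_smul (hq : 0 < q) (hm : 0 < m)
    (hX : adjMat (twoBlock p q m n) *ᵥ X = t • X) :
    (t ^ 2 - p * q) * sumP X = p * sumN X ∧ (t ^ 2 - m * n) * sumN X = n * sumP X := by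
  obtain ⟨hP, hQ, hv, hM, hN⟩ := blockSums_of_mulVec_eq_smul hX
  rw [Nat.cast_pred hq] at hQ
  rw [Nat.cast_pred hm] at hM
  constructor
  · linear_combination t * hP + p * hQ + p * hv
  · linear_combination t * hN + n * hv + n * hM

lemma sumP_ne_zero_or_sumN_ne_zero (hX0 : X ≠ 0) (ht : t ≠ 0)
    (hX : adjMat (twoBlock p q m n) *ᵥ X = t • X) : sumP X ≠ 0 ∨ sumN X ≠ 0 := by
  by_contra! ⟨hP, hN⟩
  obtain ⟨-, hQ, hv, hM, -⟩ := blockSums_of_mulVec_eq_smul hX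
  rw [hP, mul_zero] at hQ
  rw [hN, mul_zero] at hM
  rw [hP, hN, add_zero] at hv
  have h := adjMat_twoBlock_mulVec X
  rw [hX, hP, hN, (mul_eq_zero.mp hQ).resolve_left ht, (mul_eq_zero.mp hv).resolve_left ht,
    (mul_eq_zero.mp hM).resolve_left ht, add_zero, blockVec_zero] at h
  exact hX0 ((smul_eq_zero.mp h).resolve_left ht)

lemma sub_mul_sub_eq_of_mulVec_eq_smul (hq : 0 < q) (hm : 0 < m) (hX0 : X ≠ 0) (ht : t ≠ 0)
    (hX : adjMat (twoBlock p q m n) *ᵥ X = t • X) :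
    (t ^ 2 - p * q) * (t ^ 2 - m * n) = p * n :=
  have ⟨hP, hN⟩ := quotient_eqs_of_mulVec_eq_smul hq hm hX
  sub_mul_sub_eq_of_eigenpair hP hN (sumP_ne_zero_or_sumN_ne_zero hX0 ht hX)

lemma exists_mulVec_eq_smul_of_sub_mul_sub_eq (hp : 0 < p) (hq : 0 < q) (hm : 0 < m) (hn : 0 < n)
    {x : ℝ} (hx0 : x ≠ 0) (hx : (x ^ 2 - p * q) * (x ^ 2 - m * n) = p * n) :
    ∃ X : TBV p q m n → ℝ, X ≠ 0 ∧ adjMat (twoBlock p q m n) *ᵥ X = x • X := by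
  -- the eigenvector of the quotient system, scaled by `n * x` to clear denominators
  refine ⟨blockVec (n * x) (n * p) (n * (x ^ 2 - (q - 1) * p)) (n * (x ^ 2 - p * q))
    (x * (x ^ 2 - p * q)), fun h => ?_, ?_⟩
  · have := congrFun h (Sum.inl ⟨0, hp⟩)
    simp [blockVec, hn.ne', hx0] at this
  · rw [adjMat_twoBlock_mulVec_blockVec, smul_blockVec, Nat.cast_pred hq, Nat.cast_pred hm]
    congr 1
    iterate 4 ring
    linear_combination -hx

end TwoBlock

/-- the spectral radius of `G(p,q,m,n)` equals
`√(((pq+mn) + √((pq-mn)² + 4pn))/2)`. -/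
theorem twoBlock_specRad_eq (p q m n : ℕ)
    (hp : 0 < p) (hq : 0 < q) (hm : 0 < m) (hn : 0 < n) :
    specRad (twoBlock p q m n) =
      Real.sqrt ((((p : ℝ) * q + (m : ℝ) * n) +
        Real.sqrt (((p : ℝ) * q - (m : ℝ) * n) ^ 2 + 4 * (p : ℝ) * n)) / 2) := by
  set r := largerRoot (p * q) (m * n) (p * n)
  have hr : 0 < r := largerRoot_pos _ (by positivity)
  have hρ : (√r ^ 2 - p * q) * (√r ^ 2 - m * n) = p * n := by
    rw [Real.sq_sqrt hr.le]
    exact sub_mul_sub_largerRoot (by positivity)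
  rw [mul_assoc 4]
  refine IsGreatest.csSup_eq ⟨exists_mulVec_eq_smul_of_sub_mul_sub_eq hp hq hm hn
    (Real.sqrt_pos.mpr hr).ne' hρ, ?_⟩
  rintro t ⟨X, hX0, hX⟩
  rcases le_or_gt t 0 with ht | ht
  · exact ht.trans (Real.sqrt_nonneg _)
  · exact le_sqrt_largerRoot (sub_mul_sub_eq_of_mulVec_eq_smul hq hm hX0 ht.ne' hX)

end BiBlockPaper
end
end

section
/- Let p, q, m, n be positive integers with q ≥ 2 and m ≥ 2, let G = G(p,q,m,n) with parts P, Q, M, N and glue vertex v, and let X be any real eigenvector of the adjacency matrix of G corresponding to the eigenvalue ρ(G). Then for every w ∈ Q \ {v} and every u ∈ M \ {v}, X(v) = X(w) + X(u). -/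
open scoped Classical

noncomputable section

namespace BiBlockPaper

variable {V : Type*}

/-!
The neighbourhood of the glue vertex `v` is `P ∪ N`, the disjoint union of the neighbourhoods
`P` of `w` and `N` of `u`, so the eigen-equations at `w`, `u` and `v` give
`ρ X(v) = ρ X(w) + ρ X(u)`. Cancelling `ρ` needs `ρ > 0`: the eigenvalues of an adjacency
matrix sum to its trace `0` and are not all zero once there is an edge, so one is positive.
-/

open Matrix Finset

section Spectral

variable {W : Type*} [Fintype W]

lemma adjMat_isHermitian (G : SimpleGraph W) : (adjMat G).IsHermitian := by
  ext i j
  simp [adjMat, SimpleGraph.adj_comm]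

lemma trace_adjMat (G : SimpleGraph W) : (adjMat G).trace = 0 := by
  simp [Matrix.trace, adjMat]

lemma adjMat_mulVec_apply (G : SimpleGraph W) (X : W → ℝ) (i : W) :
    (adjMat G *ᵥ X) i = ∑ j with G.Adj i j, X j := by
  simp [adjMat, mulVec, dotProduct, sum_filter]

lemma finite_setOf_exists_mulVec_eq_smul (A : Matrix W W ℝ) :
    {t : ℝ | ∃ X : W → ℝ, X ≠ 0 ∧ A *ᵥ X = t • X}.Finite := by
  refine (Module.End.finite_hasEigenvalue (toLin' A)).subset ?_
  rintro t ⟨X, hX, hAX⟩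
  exact Module.End.hasEigenvalue_of_hasEigenvector
    ⟨Module.End.mem_eigenspace_iff.mpr (by rwa [toLin'_apply]), hX⟩

lemma eigenvalues_adjMat_le_specRad (G : SimpleGraph W) (i : W) :
    (adjMat_isHermitian G).eigenvalues i ≤ specRad G := by
  have hA := adjMat_isHermitian G
  refine le_csSup (finite_setOf_exists_mulVec_eq_smul (adjMat G)).bddAbove
    ⟨_, fun h => hA.eigenvectorBasis.orthonormal.ne_zero i ?_, hA.mulVec_eigenvectorBasis i⟩
  simpa using congrArg (WithLp.toLp 2) h

lemma specRad_pos_of_adj {G : SimpleGraph W} {a c : W} (hac : G.Adj a c) : 0 < specRad G := by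
  have hA := adjMat_isHermitian G
  have hne : hA.eigenvalues ≠ 0 := by
    rw [Ne, hA.eigenvalues_eq_zero_iff]
    intro h
    simpa [adjMat, hac] using congrFun (congrFun h a) c
  have hsum : ∑ i, hA.eigenvalues i = 0 := by
    exact_mod_cast (hA.trace_eq_sum_eigenvalues).symm.trans (trace_adjMat G)
  obtain ⟨i, hi⟩ : ∃ i, 0 < hA.eigenvalues i := by
    by_contra! hle
    exact hne (funext fun i => (sum_eq_zero_iff_of_nonpos fun j _ => hle j).mp hsum i (mem_univ i))
  exact hi.trans_le (eigenvalues_adjMat_le_specRad G i)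

end Spectral

section TwoBlock

variable {p q m n : ℕ}

lemma twoBlock_adj_iff_of_part_eq_one {w : TBV p q m n} (hw : part w = 1) (j : TBV p q m n) :
    (twoBlock p q m n).Adj w j ↔ part j = 0 := by
  change _ ∨ _ ∨ _ ∨ _ ↔ _
  omega

lemma twoBlock_adj_iff_of_part_eq_three {u : TBV p q m n} (hu : part u = 3) (j : TBV p q m n) :
    (twoBlock p q m n).Adj u j ↔ part j = 4 := by
  change _ ∨ _ ∨ _ ∨ _ ↔ _
  omega

lemma twoBlock_glue_adj_iff (j : TBV p q m n) :
    (twoBlock p q m n).Adj (glue p q m n) j ↔ part j = 0 ∨ part j = 4 := by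
  have hv : part (glue p q m n) = 2 := rfl
  change _ ∨ _ ∨ _ ∨ _ ↔ _
  omega

end TwoBlock

theorem twoBlock_eigenvector_glue_general (p q m n : ℕ)
    (hp : 0 < p)
    (X : TBV p q m n → ℝ)
    (hEig : (adjMat (twoBlock p q m n)).mulVec X = specRad (twoBlock p q m n) • X)
    (w u : TBV p q m n) (hw : part w = 1) (hu : part u = 3) :
    X (glue p q m n) = X w + X u := by
  set G := twoBlock p q m n
  set ρ := specRad G
  have hρ : 0 < ρ := specRad_pos_of_adj (a := glue p q m n) (c := .inl ⟨0, hp⟩)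
    ((twoBlock_glue_adj_iff _).mpr (.inl rfl))
  have row (i : TBV p q m n) : ρ * X i = ∑ j with G.Adj i j, X j := by
    rw [← adjMat_mulVec_apply, hEig, Pi.smul_apply, smul_eq_mul]
  have row_w := row w
  have row_u := row u
  have row_glue := row (glue p q m n)
  simp only [G, twoBlock_adj_iff_of_part_eq_one hw, twoBlock_adj_iff_of_part_eq_three hu,
    twoBlock_glue_adj_iff] at row_w row_u row_glue
  rw [filter_or, sum_union (disjoint_filter.mpr fun j _ h => by omega)] at row_glue
  exact mul_left_cancel₀ hρ.ne' (by linarith)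

/-- if `q ≥ 2` and `m ≥ 2`, any real eigenvector `X` of the
adjacency matrix of `G(p,q,m,n)` for the eigenvalue `ρ(G)` satisfies
`X(v) = X(w) + X(u)` for every `w ∈ Q \ {v}` (tag `1`) and `u ∈ M \ {v}` (tag `3`). -/
theorem twoBlock_eigenvector_glue (p q m n : ℕ)
    (hp : 0 < p) (hq : 2 ≤ q) (hm : 2 ≤ m) (hn : 0 < n)
    (X : TBV p q m n → ℝ) (hX : X ≠ 0)
    (hEig : (adjMat (twoBlock p q m n)).mulVec X = specRad (twoBlock p q m n) • X)
    (w u : TBV p q m n) (hw : part w = 1) (hu : part u = 3) :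
    X (glue p q m n) = X w + X u :=
  twoBlock_eigenvector_glue_general p q m n hp X hEig w u hw hu

end BiBlockPaper
end
end
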